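/- Let n ≥ 1, let a₁,…,aₙ be distinct variables not free in the λ-term N, and suppose N a₁ a₂ ⋯ aₙ =β (a₁ a₂ ⋯ aₙ)(N a₁ a₂ ⋯ aₙ) (all applications associating to the left). Then N I⋯I, i.e. N applied to n−1 copies of I, is an fpc. -/

import Mathlib

/-- Untyped λ-terms in de Bruijn notation (the variables are `ℕ`). -/
inductive Lam : Type
  | var : ℕ → Lam
  | app : Lam → Lam → Lam
  | abs : Lam → Lam
  deriving DecidableEq

namespace Lam

/-- Shift the free de Bruijn indices `≥ d` up by one. -/
def lift (d : ℕ) : Lam → Lam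
  | var n => if n < d then var n else var (n + 1)
  | app s t => app (lift d s) (lift d t)
  | abs t => abs (lift (d + 1) t)

/-- Capture-avoiding substitution `t[k := u]`. -/
def subst : Lam → ℕ → Lam → Lam
  | var n, k, u => if n < k then var n else if n = k then u else var (n - 1)
  | app s t, k, u => app (subst s k u) (subst t k u)
  | abs t, k, u => abs (subst t (k + 1) (lift 0 u))

/-- One-step β-reduction `→β`: the compatible closure of the β-rule. -/
inductive Beta : Lam → Lam → Prop
  | beta (t u : Lam) : Beta (Lam.app (Lam.abs t) u) (subst t 0 u)
  | appL {s s' : Lam} (t : Lam) : Beta s s' → Beta (Lam.app s t) (Lam.app s' t)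
  | appR (s : Lam) {t t' : Lam} : Beta t t' → Beta (Lam.app s t) (Lam.app s t')
  | abs {t t' : Lam} : Beta t t' → Beta (Lam.abs t) (Lam.abs t')

/-- `↠β`: the reflexive–transitive closure of `→β`. -/
def BetaStar : Lam → Lam → Prop := Relation.ReflTransGen Beta

/-- `→β^k`: the `k`-fold composition of `→β`. -/
def BetaN : ℕ → Lam → Lam → Prop
  | 0, s, t => s = t
  | k + 1, s, t => ∃ u, Beta s u ∧ BetaN k u t

/-- `=β`, β-convertibility: the equivalence closure of `→β`. -/
inductive Conv : Lam → Lam → Prop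
  | rel {s t : Lam} : Beta s t → Conv s t
  | refl (s : Lam) : Conv s s
  | symm {s t : Lam} : Conv s t → Conv t s
  | trans {s t u : Lam} : Conv s t → Conv t u → Conv s u

/-- The free variables of a term (as de Bruijn indices). -/
def FV : Lam → Finset ℕ
  | var n => {n}
  | app s t => FV s ∪ FV t
  | abs t => ((FV t).erase 0).image (· - 1)

/-- `Y` is a fixed point combinator (fpc): `Y x =β x (Y x)` for a variable `x` not free in `Y`. -/
def IsFPC (Y : Lam) : Prop :=
  ∀ x : ℕ, x ∉ FV Y → Conv (app Y (var x)) (app (var x) (app Y (var x)))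

/-- `I = λx.x` -/
def combI : Lam := abs (var 0)

/-- `S = λxyz.xz(yz)` -/
def combS : Lam := abs (abs (abs (app (app (var 2) (var 0)) (app (var 1) (var 0)))))

/-- `B = λxyz.x(yz)` -/
def combB : Lam := abs (abs (abs (app (var 2) (app (var 1) (var 0)))))

/-- `δ = λab.b(ab)` -/
def delta : Lam := abs (abs (app (var 0) (app (var 1) (var 0))))

/-- `η = λxf.f(xxf)` -/
def etaC : Lam := abs (abs (app (var 0) (app (app (var 1) (var 1)) (var 0))))

/-- Curry's fpc `Y₀ = λf.(λx.f(xx))(λx.f(xx))` -/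
def curryY : Lam :=
  abs (app (abs (app (var 1) (app (var 0) (var 0))))
    (abs (app (var 1) (app (var 0) (var 0)))))

/-- `A B ⋯ B`: `A` applied to `n` copies of `B`, associating to the left. -/
def appN (A B : Lam) : ℕ → Lam
  | 0 => A
  | n + 1 => app (appN A B n) B

/-- `M N₁ ⋯ Nₘ`: `M` applied to the terms in `L`, associating to the left. -/
def appList (M : Lam) (L : List Lam) : Lam := L.foldl app M

/-! Substitute `I` for `a₁, …, aₙ₋₁` and then `x` for `aₙ` in the hypothesis.
Since the `aᵢ` are distinct and not free in `N`, the left side becomes `N I⋯I x` and the head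
`a₁ ⋯ aₙ` becomes `I⋯I x` (or just `x` when `n = 1`), which converts to `x`. -/

theorem lift_lift_of_le (t : Lam) {i j : ℕ} (h : i ≤ j) :
    lift i (lift j t) = lift (j + 1) (lift i t) := by
  induction t generalizing i j with
  | var n =>
    simp only [lift]
    split_ifs <;> simp only [lift] <;> split_ifs <;> first | rfl | omega
  | app s t ihs iht => simp only [lift, ihs h, iht h]
  | abs t ih => simp only [lift, ih (Nat.succ_le_succ h)]

theorem lift_subst_of_le (t : Lam) {k d : ℕ} (u : Lam) (h : k ≤ d) :
    lift d (subst t k u) = subst (lift (d + 1) t) k (lift d u) := by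
  induction t generalizing k d u with
  | var n =>
    simp only [lift, subst]
    split_ifs <;> simp only [lift, subst] <;> split_ifs <;>
      first | rfl | omega | (congr 1; omega)
  | app s t ihs iht => simp only [lift, subst, ihs u h, iht u h]
  | abs t ih =>
    simp only [lift, subst, ih (lift 0 u) (Nat.succ_le_succ h), lift_lift_of_le u (Nat.zero_le d)]

theorem lift_subst_of_ge (t : Lam) {k d : ℕ} (u : Lam) (h : d ≤ k) :
    lift d (subst t k u) = subst (lift d t) (k + 1) (lift d u) := by
  induction t generalizing k d u with
  | var n =>
    simp only [lift, subst]
    split_ifs <;> simp only [lift, subst] <;> split_ifs <;>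
      first | rfl | omega | (congr 1; omega)
  | app s t ihs iht => simp only [lift, subst, ihs u h, iht u h]
  | abs t ih =>
    simp only [lift, subst, ih (lift 0 u) (Nat.succ_le_succ h), lift_lift_of_le u (Nat.zero_le d)]

@[simp]
theorem subst_lift (t : Lam) (j : ℕ) (u : Lam) : subst (lift j t) j u = t := by
  induction t generalizing j u with
  | var n =>
    simp only [lift]
    split_ifs <;> simp only [subst] <;> split_ifs <;> first | rfl | omega
  | app s t ihs iht => simp only [lift, subst, ihs, iht]
  | abs t ih => simp only [lift, subst, ih]

theorem subst_subst_of_le (t : Lam) {j k : ℕ} (u v : Lam) (h : j ≤ k) :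
    subst (subst t j v) k u = subst (subst t (k + 1) (lift j u)) j (subst v k u) := by
  induction t generalizing j k u v with
  | var n =>
    simp only [subst]
    split_ifs <;> (try simp only [subst, subst_lift]) <;> (try split_ifs) <;> first | rfl | omega
  | app s t ihs iht => simp only [subst, ihs u v h, iht u v h]
  | abs t ih =>
    simp only [subst, ih (lift 0 u) (lift 0 v) (Nat.succ_le_succ h),
      lift_lift_of_le u (Nat.zero_le j), lift_subst_of_ge v u (Nat.zero_le k)]

theorem Beta.lift {t t' : Lam} (h : Beta t t') (d : ℕ) : Beta (lift d t) (lift d t') := by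
  induction h generalizing d with
  | beta t u =>
    rw [lift_subst_of_le t u (Nat.zero_le d)]
    exact Beta.beta _ _
  | appL t _ ih => exact Beta.appL _ (ih d)
  | appR s _ ih => exact Beta.appR _ (ih d)
  | abs _ ih => exact Beta.abs (ih (d + 1))

theorem Beta.subst {t t' : Lam} (h : Beta t t') (k : ℕ) (u : Lam) :
    Beta (subst t k u) (subst t' k u) := by
  induction h generalizing k u with
  | beta t v =>
    rw [subst_subst_of_le t u v (Nat.zero_le k)]
    exact Beta.beta _ _
  | appL t _ ih => exact Beta.appL _ (ih k u)
  | appR s _ ih => exact Beta.appR _ (ih k u)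
  | abs _ ih => exact Beta.abs (ih (k + 1) (Lam.lift 0 u))

theorem Beta.appList {M M' : Lam} (h : Beta M M') (L : List Lam) :
    Beta (appList M L) (appList M' L) := by
  induction L generalizing M M' with
  | nil => exact h
  | cons l L ih => exact ih (Beta.appL l h)

theorem beta_combI_app (t : Lam) : Beta (app combI t) t := by
  exact Beta.beta (var 0) t

theorem Conv.map {f : Lam → Lam} (hf : ∀ {s t : Lam}, Beta s t → Beta (f s) (f t))
    {s t : Lam} (h : Conv s t) : Conv (f s) (f t) := by
  induction h with
  | rel h => exact Conv.rel (hf h)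
  | refl s => exact Conv.refl _
  | symm _ ih => exact ih.symm
  | trans _ _ ih₁ ih₂ => exact ih₁.trans ih₂

theorem Conv.appL {s s' : Lam} (h : Conv s s') (t : Lam) : Conv (app s t) (app s' t) :=
  h.map (Beta.appL t)

theorem Conv.appList {M M' : Lam} (h : Conv M M') (L : List Lam) :
    Conv (appList M L) (appList M' L) :=
  h.map (Beta.appList · L)

theorem Conv.lift {s t : Lam} (h : Conv s t) (d : ℕ) : Conv (lift d s) (lift d t) :=
  h.map (Beta.lift · d)

theorem Conv.subst {s t : Lam} (h : Conv s t) (k : ℕ) (u : Lam) :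
    Conv (subst s k u) (subst t k u) :=
  h.map (Beta.subst · k u)

theorem conv_appList_combI_replicate (m : ℕ) :
    Conv (appList combI (List.replicate m combI)) combI := by
  induction m with
  | zero => exact Conv.refl _
  | succ m ih => exact (Conv.appList (Conv.rel (beta_combI_app combI)) _).trans ih

theorem appList_concat (M : Lam) (L : List Lam) (t : Lam) :
    appList M (L ++ [t]) = app (appList M L) t := by
  simp [appList]

theorem not_mem_FV_appList {k : ℕ} {M : Lam} {L : List Lam} (hM : k ∉ FV M)
    (hL : ∀ l ∈ L, k ∉ FV l) : k ∉ FV (appList M L) := by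
  induction L generalizing M with
  | nil => exact hM
  | cons l L ih =>
    refine ih ?_ fun l' hl' => hL l' (List.mem_cons_of_mem _ hl')
    simpa [FV] using ⟨hM, hL l List.mem_cons_self⟩

/-- Replaces the free variable `k` by `u`; lifting first keeps `subst` from decrementing the
free variables above `k`. -/
def substFree (t : Lam) (k : ℕ) (u : Lam) : Lam := subst (lift (k + 1) t) k u

@[simp]
theorem substFree_app (s t : Lam) (k : ℕ) (u : Lam) :
    substFree (app s t) k u = app (substFree s k u) (substFree t k u) := rfl

@[simp]
theorem substFree_var_self (k : ℕ) (u : Lam) : substFree (var k) k u = u := by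
  simp [substFree, lift, subst]

theorem substFree_var_of_ne {j k : ℕ} (h : j ≠ k) (u : Lam) : substFree (var j) k u = var j := by
  simp only [substFree, lift]
  split_ifs <;> simp only [subst] <;> split_ifs <;> first | rfl | omega

theorem substFree_of_not_mem_FV (t : Lam) {k : ℕ} (u : Lam) (hk : k ∉ FV t) :
    substFree t k u = t := by
  induction t generalizing k u with
  | var n => exact substFree_var_of_ne (by simpa [FV, eq_comm] using hk) u
  | app s t ihs iht =>
    simp only [FV, Finset.mem_union, not_or] at hk
    rw [substFree_app, ihs u hk.1, iht u hk.2]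
  | abs t ih =>
    have hk' : k + 1 ∉ FV t := fun hmem =>
      hk (Finset.mem_image.2 ⟨k + 1, Finset.mem_erase.2 ⟨k.succ_ne_zero, hmem⟩, rfl⟩)
    exact congrArg abs (ih (lift 0 u) hk')

theorem substFree_appList (M : Lam) (L : List Lam) (k : ℕ) (u : Lam) :
    substFree (appList M L) k u = appList (substFree M k u) (L.map (substFree · k u)) := by
  induction L generalizing M with
  | nil => rfl
  | cons l L ih => exact ih (app M l)

theorem Conv.substFree {s t : Lam} (h : Conv s t) (k : ℕ) (u : Lam) :
    Conv (substFree s k u) (substFree t k u) :=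
  (h.lift (k + 1)).subst k u

def substFreeList (vs : List ℕ) (u t : Lam) : Lam := vs.foldl (fun s v => substFree s v u) t

@[simp]
theorem substFreeList_app (vs : List ℕ) (u s t : Lam) :
    substFreeList vs u (app s t) = app (substFreeList vs u s) (substFreeList vs u t) := by
  induction vs generalizing s t with
  | nil => rfl
  | cons v vs ih => exact ih _ _

theorem substFreeList_of_not_mem_FV (vs : List ℕ) (u : Lam) {t : Lam}
    (ht : ∀ v ∈ vs, v ∉ FV t) : substFreeList vs u t = t := by
  induction vs with
  | nil => rfl
  | cons v vs ih =>
    simp only [substFreeList, List.foldl_cons]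
    rw [substFree_of_not_mem_FV t u (ht v List.mem_cons_self)]
    exact ih fun v' hv' => ht v' (List.mem_cons_of_mem _ hv')

theorem substFreeList_var_of_not_mem {w : ℕ} {vs : List ℕ} (hw : w ∉ vs) (u : Lam) :
    substFreeList vs u (var w) = var w :=
  substFreeList_of_not_mem_FV vs u fun _ hv hvw => hw (Finset.mem_singleton.1 hvw ▸ hv)

theorem Conv.substFreeList {s t : Lam} (h : Conv s t) (vs : List ℕ) (u : Lam) :
    Conv (substFreeList vs u s) (substFreeList vs u t) := by
  induction vs generalizing s t with
  | nil => exact h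
  | cons v vs ih => exact ih (h.substFree v u)

theorem substFreeList_appList_map_var {vs : List ℕ} (hvs : vs.Nodup) {M u : Lam}
    (hM : ∀ v ∈ vs, v ∉ FV M) (hu : ∀ v ∈ vs, v ∉ FV u) :
    substFreeList vs u (appList M (vs.map var)) = appList M (List.replicate vs.length u) := by
  induction vs generalizing M with
  | nil => rfl
  | cons v vs ih =>
    obtain ⟨hv, hvs⟩ := List.nodup_cons.1 hvs
    have hvars : (vs.map var).map (substFree · v u) = vs.map var := by
      rw [List.map_map]
      exact List.map_congr_left fun w hw => substFree_var_of_ne (ne_of_mem_of_not_mem hw hv) u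
    have hstep : substFree (appList (app M (var v)) (vs.map var)) v u
        = appList (app M u) (vs.map var) := by
      rw [substFree_appList, hvars, substFree_app, substFree_var_self,
        substFree_of_not_mem_FV M u (hM v List.mem_cons_self)]
    change substFreeList vs u (substFree (appList (app M (var v)) (vs.map var)) v u)
      = appList (app M u) (List.replicate vs.length u)
    rw [hstep]
    refine ih hvs (fun w hw => ?_) (fun w hw => hu w (List.mem_cons_of_mem _ hw))
    simpa [FV] using ⟨hM w (List.mem_cons_of_mem _ hw), hu w (List.mem_cons_of_mem _ hw)⟩

theorem substFree_substFreeList_appList_map_var {vs : List ℕ} {w : ℕ}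
    (hvs : (vs ++ [w]).Nodup) {M u : Lam} (hM : ∀ v ∈ vs ++ [w], v ∉ FV M)
    (hu : ∀ v ∈ vs ++ [w], v ∉ FV u) (t : Lam) :
    substFree (substFreeList vs u (appList M ((vs ++ [w]).map var))) w t
      = app (appList M (List.replicate vs.length u)) t := by
  have hw : w ∉ vs := fun h => List.disjoint_of_nodup_append hvs h (List.mem_singleton_self w)
  have hw_last : w ∈ vs ++ [w] := List.mem_append_right _ (List.mem_singleton_self w)
  have hvs_sub : ∀ v ∈ vs, v ∈ vs ++ [w] := fun _ => List.mem_append_left _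
  rw [List.map_append, List.map_singleton, appList_concat, substFreeList_app,
    substFreeList_appList_map_var hvs.of_append_left (fun v hv => hM v (hvs_sub v hv))
      (fun v hv => hu v (hvs_sub v hv)),
    substFreeList_var_of_not_mem hw,
    substFree_app, substFree_var_self, substFree_of_not_mem_FV _ t]
  exact not_mem_FV_appList (hM w hw_last) fun l hl => List.eq_of_mem_replicate hl ▸ hu w hw_last

/-- if `N a₁ ⋯ aₙ =β (a₁ ⋯ aₙ)(N a₁ ⋯ aₙ)` for distinct variables
    `a₁,…,aₙ` (`n ≥ 1`) not free in `N`, then `N I⋯I` (`n-1` copies of `I`) is an fpc.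
    Here the list `a :: rest` is the list of variables `a₁,…,aₙ`. -/
theorem pre_fpc_gives_fpc (N : Lam) (a : ℕ) (rest : List ℕ)
    (hdistinct : (a :: rest).Nodup)
    (hfresh : ∀ x ∈ a :: rest, x ∉ FV N)
    (heq : Conv (appList N ((a :: rest).map var))
      (app (appList (var a) (rest.map var)) (appList N ((a :: rest).map var)))) :
    IsFPC (appList N (List.replicate rest.length combI)) := by
  intro x _
  obtain ⟨vs, w, hsplit⟩ : ∃ vs w, a :: rest = vs ++ [w] :=
    ⟨_, _, (List.dropLast_append_getLast (List.cons_ne_nil a rest)).symm⟩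
  have hlen : rest.length = vs.length := by simpa using congrArg List.length hsplit
  have hI : ∀ v ∈ vs ++ [w], v ∉ FV combI := fun _ _ => Finset.notMem_empty _
  have hhead : Conv (appList (var a) (rest.map var)) (appList combI ((a :: rest).map var)) :=
    Conv.appList (Conv.symm (Conv.rel (beta_combI_app _))) _
  have key := ((heq.trans (hhead.appL _)).substFreeList vs combI).substFree w (var x)
  rw [hsplit] at hdistinct hfresh key
  rw [substFreeList_app, substFree_app,
    substFree_substFreeList_appList_map_var hdistinct hfresh hI,
    substFree_substFreeList_appList_map_var hdistinct hI hI] at key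
  have hx : Conv (app (appList combI (List.replicate vs.length combI)) (var x)) (var x) :=
    ((conv_appList_combI_replicate _).appL _).trans (Conv.rel (beta_combI_app _))
  rw [hlen]
  exact key.trans (hx.appL _)

end Lam
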